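/- Let N ≥ 1 and I ≥ 1, let D_i : ℝ^N → ℝ^{M_i} be linear maps, let h : ℝ^N → ℝ and f : ℝ^N → (−∞,+∞] be measurable with 0 < ∫_{ℝ^N} exp(−h(x)−f(x)) dx < ∞, and for each i let g_i : ℝ^{M_i} → ℝ be continuous with exp(−g_i) bounded. Let π be the probability measure on ℝ^N with density proportional to x ↦ exp(−h(x)−f(x)−∑_{i=1}^I g_i(D_i x)), and for η = (η_1,…,η_I) ∈ (0,∞)^I let π_η be the probability measure with density proportional to x ↦ exp(−h(x)−f(x)) ∏_{i=1}^I (2πη_i²)^{−M_i/2} ∫_{ℝ^{M_i}} exp(−g_i(z)) exp(−‖D_i x − z‖²/(2η_i²)) dz. Then ‖π − π_η‖_TV → 0 as max_{1≤i≤I} η_i → 0⁺. -/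

import Mathlib

/-!
Substituting `z = D_i x + η_i v`, the `i`-th factor of the density of `π_η` becomes the mean of
`exp (-g_i (D_i x + η_i V))` over a standard Gaussian `V`. It is therefore bounded by
`sup exp (-g_i)` and, by dominated convergence, tends to `exp (-g_i (D_i x))`. A second dominated
convergence, with dominating function `(∏ᵢ sup exp (-g_i)) · exp (-h - f)`, gives `L¹`
convergence of the unnormalised densities, and the total variation distance between two
normalised densities is at most twice their `L¹` distance over the normalising constant of `π`.
-/

open MeasureTheory Filter Topology

section GaussianSmoothing

open Real Module

variable {E : Type*} [NormedAddCommGroup E] [InnerProductSpace ℝ E] [FiniteDimensional ℝ E]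
  [MeasurableSpace E] [BorelSpace E]

noncomputable def gaussianSmoothing (φ : E → ℝ) (t : ℝ) (y : E) : ℝ :=
  (2 * π * t ^ 2) ^ (-(finrank ℝ E : ℝ) / 2) * ∫ z, φ z * exp (-‖y - z‖ ^ 2 / (2 * t ^ 2))

lemma integral_exp_neg_sq_norm_div_two :
    ∫ v : E, exp (-‖v‖ ^ 2 / 2) = (2 * π) ^ ((finrank ℝ E : ℝ) / 2) := by
  have h := GaussianFourier.integral_rexp_neg_mul_sq_norm (V := E) (b := 1 / 2) (by norm_num)
  convert h using 3 with v
  · ring_nf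
  · ring

lemma integrable_exp_neg_sq_norm_div_two : Integrable fun v : E => exp (-‖v‖ ^ 2 / 2) :=
  .of_integral_ne_zero (by rw [integral_exp_neg_sq_norm_div_two]; positivity)

lemma gaussianSmoothing_eq_integral_comp_add_smul (φ : E → ℝ) (y : E) {t : ℝ} (ht : 0 < t) :
    gaussianSmoothing φ t y =
      (2 * π) ^ (-(finrank ℝ E : ℝ) / 2) * ∫ v, φ (y + t • v) * exp (-‖v‖ ^ 2 / 2) := by
  have h_translate : ∫ z, φ z * exp (-‖y - z‖ ^ 2 / (2 * t ^ 2))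
      = ∫ w, φ (y + w) * exp (-‖w‖ ^ 2 / (2 * t ^ 2)) := by
    rw [← integral_add_left_eq_self _ y]
    simp
  have h_scale : ∫ v, φ (y + t • v) * exp (-‖v‖ ^ 2 / 2)
      = (t ^ finrank ℝ E)⁻¹ * ∫ w, φ (y + w) * exp (-‖w‖ ^ 2 / (2 * t ^ 2)) := by
    rw [← smul_eq_mul, ← Measure.integral_comp_smul_of_nonneg volume _ t (hR := ht.le)]
    congr with v
    rw [norm_smul, Real.norm_of_nonneg ht.le]
    field_simp
  have h_const : (2 * π * t ^ 2) ^ (-(finrank ℝ E : ℝ) / 2)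
      = (2 * π) ^ (-(finrank ℝ E : ℝ) / 2) * (t ^ finrank ℝ E)⁻¹ := by
    rw [mul_rpow (by positivity) (by positivity), ← rpow_natCast t 2, ← rpow_mul ht.le,
      ← rpow_natCast t (finrank ℝ E), ← rpow_neg ht.le]
    congr 2
    ring
  rw [gaussianSmoothing, h_const, h_scale, h_translate, mul_assoc]

variable {φ : E → ℝ} {C : ℝ}

lemma integrable_comp_add_smul_mul_exp (hφ : Measurable φ) (hφC : ∀ z, ‖φ z‖ ≤ C) (y : E) (t : ℝ) :
    Integrable fun v => φ (y + t • v) * exp (-‖v‖ ^ 2 / 2) :=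
  integrable_exp_neg_sq_norm_div_two.bdd_mul
    (hφ.comp (by fun_prop)).aestronglyMeasurable (ae_of_all _ fun _ => hφC _)

lemma gaussianSmoothing_nonneg (hφ : ∀ z, 0 ≤ φ z) (t : ℝ) (y : E) :
    0 ≤ gaussianSmoothing φ t y :=
  mul_nonneg (by positivity) (integral_nonneg fun z => mul_nonneg (hφ z) (exp_pos _).le)

lemma gaussianSmoothing_le (hφ : Measurable φ) (hφC : ∀ z, ‖φ z‖ ≤ C) (y : E) {t : ℝ}
    (ht : 0 < t) : gaussianSmoothing φ t y ≤ C := by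
  have h_int : ∫ v, φ (y + t • v) * exp (-‖v‖ ^ 2 / 2) ≤ C * (2 * π) ^ ((finrank ℝ E : ℝ) / 2) := by
    rw [← integral_exp_neg_sq_norm_div_two, ← integral_const_mul]
    refine integral_mono (integrable_comp_add_smul_mul_exp hφ hφC y t)
      (integrable_exp_neg_sq_norm_div_two.const_mul C) fun v => ?_
    exact mul_le_mul_of_nonneg_right ((le_abs_self _).trans (hφC _)) (exp_pos _).le
  calc gaussianSmoothing φ t y
      ≤ (2 * π) ^ (-(finrank ℝ E : ℝ) / 2) * (C * (2 * π) ^ ((finrank ℝ E : ℝ) / 2)) := by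
        rw [gaussianSmoothing_eq_integral_comp_add_smul φ y ht]
        gcongr
    _ = C := by
        rw [mul_left_comm, ← rpow_add (by positivity), neg_div, neg_add_cancel, rpow_zero, mul_one]

lemma measurable_gaussianSmoothing (hφ : Measurable φ) (t : ℝ) :
    Measurable (gaussianSmoothing φ t) := by
  have h_kernel : StronglyMeasurable fun q : E × E =>
      φ q.2 * exp (-‖q.1 - q.2‖ ^ 2 / (2 * t ^ 2)) :=
    (by fun_prop : Measurable _).stronglyMeasurable
  exact measurable_const.mul h_kernel.integral_prod_right'.measurable

lemma tendsto_gaussianSmoothing (hφ : Continuous φ) (hφC : ∀ z, ‖φ z‖ ≤ C) (y : E) :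
    Tendsto (fun t => gaussianSmoothing φ t y) (𝓝[>] 0) (𝓝 (φ y)) := by
  have h_dct : Tendsto (fun t : ℝ => ∫ v : E, φ (y + t • v) * exp (-‖v‖ ^ 2 / 2)) (𝓝 0)
      (𝓝 (∫ v : E, φ y * exp (-‖v‖ ^ 2 / 2))) := by
    refine tendsto_integral_filter_of_dominated_convergence _
      (Eventually.of_forall fun t => (by fun_prop : Continuous _).aestronglyMeasurable)
      (Eventually.of_forall fun t => Eventually.of_forall fun v => ?_)
      (integrable_exp_neg_sq_norm_div_two.const_mul C) (Eventually.of_forall fun v => ?_)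
    · rw [norm_mul, norm_of_nonneg (exp_pos _).le]
      exact mul_le_mul_of_nonneg_right (hφC _) (exp_pos _).le
    · have h_cont : Continuous fun t : ℝ => φ (y + t • v) * exp (-‖v‖ ^ 2 / 2) := by fun_prop
      simpa using h_cont.tendsto 0
  have h_lim : (2 * π) ^ (-(finrank ℝ E : ℝ) / 2) * ∫ v : E, φ y * exp (-‖v‖ ^ 2 / 2) = φ y := by
    rw [integral_const_mul, integral_exp_neg_sq_norm_div_two, mul_left_comm,
      ← rpow_add (by positivity), neg_div, neg_add_cancel, rpow_zero, mul_one]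
  rw [← h_lim]
  refine ((h_dct.const_mul _).mono_left nhdsWithin_le_nhds).congr' ?_
  filter_upwards [self_mem_nhdsWithin] with t ht
  exact (gaussianSmoothing_eq_integral_comp_add_smul φ y ht).symm

end GaussianSmoothing

lemma norm_prod_le_prod_of_norm_le {ι : Type*} [Fintype ι] {E : ι → Type*} {φ : ∀ i, E i → ℝ}
    {C : ι → ℝ} (hφC : ∀ i z, ‖φ i z‖ ≤ C i) (y : ∀ i, E i) : ‖∏ i, φ i (y i)‖ ≤ ∏ i, C i := by
  rw [norm_prod]
  exact Finset.prod_le_prod (fun i _ => norm_nonneg _) fun i _ => hφC i _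

section ProductOfSmoothings

variable {ι : Type*} [Fintype ι] {E : ι → Type*} [∀ i, NormedAddCommGroup (E i)]
  [∀ i, InnerProductSpace ℝ (E i)] [∀ i, FiniteDimensional ℝ (E i)] [∀ i, MeasurableSpace (E i)]
  [∀ i, BorelSpace (E i)] {φ : ∀ i, E i → ℝ} {C : ι → ℝ}

lemma norm_prod_gaussianSmoothing_le (hφ : ∀ i, Measurable (φ i)) (hφ0 : ∀ i z, 0 ≤ φ i z)
    (hφC : ∀ i z, ‖φ i z‖ ≤ C i) {η : ι → ℝ} (hη : ∀ i, 0 < η i) (y : ∀ i, E i) :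
    ‖∏ i, gaussianSmoothing (φ i) (η i) (y i)‖ ≤ ∏ i, C i :=
  norm_prod_le_prod_of_norm_le (φ := fun i => gaussianSmoothing (φ i) (η i)) (fun i z => by
    rw [Real.norm_of_nonneg (gaussianSmoothing_nonneg (hφ0 i) _ _)]
    exact gaussianSmoothing_le (hφ i) (hφC i) z (hη i)) y

lemma tendsto_prod_gaussianSmoothing (hφ : ∀ i, Continuous (φ i)) (hφC : ∀ i z, ‖φ i z‖ ≤ C i)
    (y : ∀ i, E i) :
    Tendsto (fun η : ι → ℝ => ∏ i, gaussianSmoothing (φ i) (η i) (y i))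
      (𝓝[{η | ∀ i, 0 < η i}] 0) (𝓝 (∏ i, φ i (y i))) := by
  refine tendsto_finsetProd _ fun i _ => (tendsto_gaussianSmoothing (hφ i) (hφC i) (y i)).comp ?_
  refine tendsto_nhdsWithin_iff.2 ⟨?_, eventually_nhdsWithin_of_forall fun η hη => hη i⟩
  exact ((continuous_apply i).tendsto' 0 0 rfl).mono_left nhdsWithin_le_nhds

end ProductOfSmoothings

lemma tendsto_integral_norm_sub_of_dominated {α β G : Type*} [MeasurableSpace α]
    [NormedAddCommGroup G] {μ : Measure α} {l : Filter β} [l.IsCountablyGenerated]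
    {F : β → α → G} {f : α → G} {bound : α → ℝ}
    (hF_meas : ∀ᶠ b in l, AEStronglyMeasurable (F b) μ) (hf_meas : AEStronglyMeasurable f μ)
    (hF_bound : ∀ᶠ b in l, ∀ᵐ a ∂μ, ‖F b a‖ ≤ bound a) (hf_bound : ∀ᵐ a ∂μ, ‖f a‖ ≤ bound a)
    (h_bound : Integrable bound μ) (h_lim : ∀ᵐ a ∂μ, Tendsto (fun b => F b a) l (𝓝 (f a))) :
    Tendsto (fun b => ∫ a, ‖F b a - f a‖ ∂μ) l (𝓝 0) := by
  have h := tendsto_integral_filter_of_dominated_convergence (fun a => bound a + bound a)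
    (hF_meas.mono fun b hb => (hb.sub hf_meas).norm)
    (hF_bound.mono fun b hb => by
      filter_upwards [hb, hf_bound] with a h₁ h₂
      exact (norm_norm _).trans_le ((norm_sub_le _ _).trans (add_le_add h₁ h₂)))
    (h_bound.add h_bound)
    (h_lim.mono fun a ha => (ha.sub_const (f a)).norm)
  simpa using h

section NormalizedDensity

variable {α : Type*} [MeasurableSpace α] {μ : Measure α}

noncomputable def normalizedWithDensity (μ : Measure α) (q : α → ℝ) : Measure α :=
  (∫⁻ x, ENNReal.ofReal (q x) ∂μ)⁻¹ • μ.withDensity fun x => ENNReal.ofReal (q x)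

lemma normalizedWithDensity_toReal_apply {q : α → ℝ} (hq0 : 0 ≤ q) (hq : Integrable q μ)
    {A : Set α} (hA : MeasurableSet A) :
    (normalizedWithDensity μ q A).toReal = (∫ x in A, q x ∂μ) / ∫ x, q x ∂μ := by
  rw [normalizedWithDensity, Measure.smul_apply, withDensity_apply _ hA, smul_eq_mul,
    ← ofReal_integral_eq_lintegral_ofReal hq (ae_of_all _ hq0),
    ← ofReal_integral_eq_lintegral_ofReal hq.restrict (ae_of_all _ hq0),
    ENNReal.toReal_mul, ENNReal.toReal_inv, ENNReal.toReal_ofReal (integral_nonneg hq0),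
    ENNReal.toReal_ofReal (integral_nonneg hq0), div_eq_inv_mul]

-- `W = 0` is allowed: then `b = 0`, and `b / W = 0`.
lemma abs_div_sub_div_le {a b Z W : ℝ} (hZ : 0 < Z) (hb : 0 ≤ b) (hbW : b ≤ W) :
    |a / Z - b / W| ≤ (|a - b| + |W - Z|) / Z := by
  rcases (hb.trans hbW).eq_or_lt with rfl | hW
  · obtain rfl : b = 0 := le_antisymm hbW hb
    rw [div_zero, sub_zero, sub_zero, abs_div, abs_of_pos hZ]
    gcongr
    exact le_add_of_nonneg_right (abs_nonneg _)
  · calc |a / Z - b / W| = |(a - b) / Z + b / W * ((W - Z) / Z)| := by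
          congr 1
          field_simp
          ring
      _ ≤ |a - b| / Z + b / W * (|W - Z| / Z) := by
          refine (abs_add_le _ _).trans_eq ?_
          rw [abs_mul, abs_div, abs_div, abs_div, abs_of_pos hZ, abs_of_nonneg hb, abs_of_pos hW]
      _ ≤ |a - b| / Z + 1 * (|W - Z| / Z) := by
          gcongr
          exact div_le_one_of_le₀ hbW hW.le
      _ = (|a - b| + |W - Z|) / Z := by ring

lemma abs_normalizedWithDensity_sub_le {p q : α → ℝ} (hp0 : 0 ≤ p) (hq0 : 0 ≤ q)
    (hp : Integrable p μ) (hq : Integrable q μ) (hZ : 0 < ∫ x, p x ∂μ) {A : Set α}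
    (hA : MeasurableSet A) :
    |(normalizedWithDensity μ p A).toReal - (normalizedWithDensity μ q A).toReal|
      ≤ 2 * (∫ x, ‖q x - p x‖ ∂μ) / ∫ x, p x ∂μ := by
  rw [normalizedWithDensity_toReal_apply hp0 hp hA, normalizedWithDensity_toReal_apply hq0 hq hA]
  have h_set : |(∫ x in A, p x ∂μ) - ∫ x in A, q x ∂μ| ≤ ∫ x, ‖q x - p x‖ ∂μ := by
    rw [abs_sub_comm, ← integral_sub hq.restrict hp.restrict, ← Real.norm_eq_abs]
    exact (norm_integral_le_integral_norm _).trans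
      (setIntegral_le_integral (hq.sub hp).norm (ae_of_all _ fun x => norm_nonneg _))
  have h_total : |(∫ x, q x ∂μ) - ∫ x, p x ∂μ| ≤ ∫ x, ‖q x - p x‖ ∂μ := by
    rw [← integral_sub hq hp, ← Real.norm_eq_abs]
    exact norm_integral_le_integral_norm _
  calc _ ≤ (|(∫ x in A, p x ∂μ) - ∫ x in A, q x ∂μ| + |(∫ x, q x ∂μ) - ∫ x, p x ∂μ|)
        / ∫ x, p x ∂μ :=
        abs_div_sub_div_le hZ (integral_nonneg hq0) (setIntegral_le_integral hq (ae_of_all _ hq0))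
    _ ≤ 2 * (∫ x, ‖q x - p x‖ ∂μ) / ∫ x, p x ∂μ := by
        rw [two_mul]
        gcongr

end NormalizedDensity

section WeightedProductOfSmoothings

variable {X ι : Type*} [MeasurableSpace X] {μ : Measure X} [Fintype ι] {E : ι → Type*}
  [∀ i, NormedAddCommGroup (E i)] [∀ i, InnerProductSpace ℝ (E i)]
  [∀ i, FiniteDimensional ℝ (E i)] [∀ i, MeasurableSpace (E i)] [∀ i, BorelSpace (E i)]
  {φ : ∀ i, E i → ℝ} {C : ι → ℝ} {w : X → ℝ} {y : ∀ i, X → E i}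

lemma integrable_mul_prod_gaussianSmoothing (hw : Integrable w μ) (hy : ∀ i, Measurable (y i))
    (hφ : ∀ i, Measurable (φ i)) (hφ0 : ∀ i z, 0 ≤ φ i z) (hφC : ∀ i z, ‖φ i z‖ ≤ C i)
    {η : ι → ℝ} (hη : ∀ i, 0 < η i) :
    Integrable (fun x => w x * ∏ i, gaussianSmoothing (φ i) (η i) (y i x)) μ :=
  hw.mul_bdd (Finset.aestronglyMeasurable_fun_prod _ fun i _ =>
      ((measurable_gaussianSmoothing (hφ i) (η i)).comp (hy i)).aestronglyMeasurable)
    (ae_of_all _ fun _ => norm_prod_gaussianSmoothing_le hφ hφ0 hφC hη _)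

lemma tendsto_integral_norm_mul_prod_gaussianSmoothing_sub (hw : Integrable w μ)
    (hy : ∀ i, Measurable (y i)) (hφ : ∀ i, Continuous (φ i)) (hφ0 : ∀ i z, 0 ≤ φ i z)
    (hφC : ∀ i z, ‖φ i z‖ ≤ C i) :
    Tendsto (fun η : ι → ℝ => ∫ x, ‖w x * ∏ i, gaussianSmoothing (φ i) (η i) (y i x)
        - w x * ∏ i, φ i (y i x)‖ ∂μ) (𝓝[{η | ∀ i, 0 < η i}] 0) (𝓝 0) := by
  refine tendsto_integral_norm_sub_of_dominated (bound := fun x => ‖w x‖ * ∏ i, C i)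
    (eventually_nhdsWithin_of_forall fun η hη => (integrable_mul_prod_gaussianSmoothing hw hy
      (fun i => (hφ i).measurable) hφ0 hφC hη).aestronglyMeasurable) ?_
    (eventually_nhdsWithin_of_forall fun η hη => ae_of_all _ fun x => ?_) (ae_of_all _ fun x => ?_)
    (hw.norm.mul_const _)
    (ae_of_all _ fun _ => (tendsto_prod_gaussianSmoothing hφ hφC _).const_mul _)
  · exact hw.aestronglyMeasurable.mul (Finset.aestronglyMeasurable_fun_prod _ fun i _ =>
      ((hφ i).measurable.comp (hy i)).aestronglyMeasurable)
  · rw [norm_mul]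
    exact mul_le_mul_of_nonneg_left (norm_prod_gaussianSmoothing_le (fun i => (hφ i).measurable)
      hφ0 hφC hη _) (norm_nonneg _)
  · rw [norm_mul]
    exact mul_le_mul_of_nonneg_left (norm_prod_le_prod_of_norm_le hφC _) (norm_nonneg _)

end WeightedProductOfSmoothings

lemma integral_mul_pos_of_pos {α : Type*} [MeasurableSpace α] {μ : Measure α} {f w : α → ℝ}
    (hf0 : 0 ≤ f) (hf : Integrable f μ) (hfw : Integrable (fun x => f x * w x) μ)
    (hw : ∀ x, 0 < w x) (hpos : 0 < ∫ x, f x ∂μ) : 0 < ∫ x, f x * w x ∂μ := by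
  rw [integral_pos_iff_support_of_nonneg hf0 hf] at hpos
  rwa [integral_pos_iff_support_of_nonneg (fun x => mul_nonneg (hf0 x) (hw x).le) hfw,
    Function.support_mul, Function.support_eq_univ fun x => (hw x).ne', Set.inter_univ]

theorem stmt19_general (N I : ℕ) (Mi : Fin I → ℕ)
    (D : ∀ i, EuclideanSpace ℝ (Fin N) →ₗ[ℝ] EuclideanSpace ℝ (Fin (Mi i)))
    (h : EuclideanSpace ℝ (Fin N) → ℝ)
    (f : EuclideanSpace ℝ (Fin N) → EReal)
    (ef : EuclideanSpace ℝ (Fin N) → ℝ)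
    (hef : ∀ x, ef x = Real.exp (-h x) *
      (if f x = ⊤ then 0 else Real.exp (-(f x).toReal)))
    (hint : Integrable ef) (hpos : 0 < ∫ x, ef x)
    (g : ∀ i, EuclideanSpace ℝ (Fin (Mi i)) → ℝ) (hg : ∀ i, Continuous (g i))
    (hgb : ∀ i, ∃ C, ∀ z, Real.exp (-g i z) ≤ C)
    (p : EuclideanSpace ℝ (Fin N) → ℝ)
    (hp : ∀ x, p x = ef x * Real.exp (-∑ i, g i (D i x)))
    (pe : (Fin I → ℝ) → EuclideanSpace ℝ (Fin N) → ℝ)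
    (hpe : ∀ η x, pe η x = ef x * ∏ i, ((2 * Real.pi * η i ^ 2) ^ (-(Mi i : ℝ) / 2) *
        ∫ z, Real.exp (-g i z) * Real.exp (-‖D i x - z‖ ^ 2 / (2 * η i ^ 2))))
    (π : Measure (EuclideanSpace ℝ (Fin N)))
    (hπ : π = (∫⁻ x, ENNReal.ofReal (p x))⁻¹ •
        volume.withDensity fun x => ENNReal.ofReal (p x))
    (πe : (Fin I → ℝ) → Measure (EuclideanSpace ℝ (Fin N)))
    (hπe : ∀ η, πe η = (∫⁻ x, ENNReal.ofReal (pe η x))⁻¹ •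
        volume.withDensity fun x => ENNReal.ofReal (pe η x)) :
    Tendsto (fun η : Fin I → ℝ =>
        ⨆ A : {A : Set (EuclideanSpace ℝ (Fin N)) // MeasurableSet A},
          |(π A.1).toReal - (πe η A.1).toReal|)
      (nhdsWithin 0 {η : Fin I → ℝ | ∀ i, 0 < η i}) (nhds 0) := by
  choose C hC using hgb
  set φ : ∀ i, EuclideanSpace ℝ (Fin (Mi i)) → ℝ := fun i z => Real.exp (-g i z)
  have hφ : ∀ i, Continuous (φ i) := fun i => (hg i).neg.rexp
  have hφ0 : ∀ i z, 0 ≤ φ i z := fun i z => (Real.exp_pos _).le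
  have hφC : ∀ i z, ‖φ i z‖ ≤ C i := fun i z => (Real.norm_of_nonneg (hφ0 i z)).trans_le (hC i z)
  have hD : ∀ i, Measurable (D i) := fun i => (D i).continuous_of_finiteDimensional.measurable
  have hef0 : 0 ≤ ef := fun x => by rw [hef]; positivity
  have hp' : p = fun x => ef x * ∏ i, φ i (D i x) := by
    ext x
    rw [hp, ← Real.exp_sum, Finset.sum_neg_distrib]
  have hpe' : pe = fun η x => ef x * ∏ i, gaussianSmoothing (φ i) (η i) (D i x) := by
    ext η x
    simp only [hpe, gaussianSmoothing, finrank_euclideanSpace_fin, φ]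
  subst hp' hpe' hπ
  have hp_int : Integrable fun x => ef x * ∏ i, φ i (D i x) :=
    hint.mul_bdd (by fun_prop) (ae_of_all _ fun x => norm_prod_le_prod_of_norm_le hφC _)
  have hZ := integral_mul_pos_of_pos hef0 hint hp_int
    (fun x => Finset.prod_pos fun i _ => Real.exp_pos _) hpos
  have hL1 := ((tendsto_integral_norm_mul_prod_gaussianSmoothing_sub hint hD hφ hφ0 hφC).const_mul
    2).div_const (∫ x, ef x * ∏ i, φ i (D i x))
  rw [mul_zero, zero_div] at hL1
  refine squeeze_zero' (Eventually.of_forall fun η => Real.iSup_nonneg fun A => abs_nonneg _)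
    (eventually_nhdsWithin_of_forall fun η hη => ciSup_le fun A => ?_) hL1
  rw [hπe]
  exact abs_normalizedWithDensity_sub_le
    (fun x => mul_nonneg (hef0 x) (Finset.prod_nonneg fun i _ => hφ0 i _))
    (fun x => mul_nonneg (hef0 x)
      (Finset.prod_nonneg fun i _ => gaussianSmoothing_nonneg (hφ0 i) _ _))
    hp_int (integrable_mul_prod_gaussianSmoothing hint hD (fun i => (hφ i).measurable) hφ0 hφC hη)
    hZ A.2

/-- Multi-term AXDA marginal convergence (Appendix A): the measure `π_η` with density
proportional to `exp(−h−f) ∏_i (2πη_i²)^{−M_i/2} ∫ exp(−g_i(z)) exp(−‖D_i x−z‖²/(2η_i²)) dz`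
converges to `π` (density proportional to `exp(−h−f−∑_i g_i∘D_i)`) in total variation
as `max_i η_i → 0⁺`, i.e. as `η → 0` within the positive orthant of `ℝ^I`. `f` takes
values in `(−∞,∞]`, encoded as an `EReal`-valued function never equal to `⊥`, with
`exp(−f(x))` interpreted as `0` when `f(x) = ⊤`. -/
theorem stmt19 (N I : ℕ) (hN : 1 ≤ N) (hI : 1 ≤ I) (Mi : Fin I → ℕ) (hMi : ∀ i, 1 ≤ Mi i)
    (D : ∀ i, EuclideanSpace ℝ (Fin N) →ₗ[ℝ] EuclideanSpace ℝ (Fin (Mi i)))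
    (h : EuclideanSpace ℝ (Fin N) → ℝ) (hh : Measurable h)
    (f : EuclideanSpace ℝ (Fin N) → EReal) (hf : Measurable f)
    (hfbot : ∀ x, f x ≠ ⊥)
    (ef : EuclideanSpace ℝ (Fin N) → ℝ)
    (hef : ∀ x, ef x = Real.exp (-h x) *
      (if f x = ⊤ then 0 else Real.exp (-(f x).toReal)))
    (hint : Integrable ef) (hpos : 0 < ∫ x, ef x)
    (g : ∀ i, EuclideanSpace ℝ (Fin (Mi i)) → ℝ) (hg : ∀ i, Continuous (g i))
    (hgb : ∀ i, ∃ C, ∀ z, Real.exp (-g i z) ≤ C)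
    (p : EuclideanSpace ℝ (Fin N) → ℝ)
    (hp : ∀ x, p x = ef x * Real.exp (-∑ i, g i (D i x)))
    (pe : (Fin I → ℝ) → EuclideanSpace ℝ (Fin N) → ℝ)
    (hpe : ∀ η x, pe η x = ef x * ∏ i, ((2 * Real.pi * η i ^ 2) ^ (-(Mi i : ℝ) / 2) *
        ∫ z, Real.exp (-g i z) * Real.exp (-‖D i x - z‖ ^ 2 / (2 * η i ^ 2))))
    (π : Measure (EuclideanSpace ℝ (Fin N)))
    (hπ : π = (∫⁻ x, ENNReal.ofReal (p x))⁻¹ •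
        volume.withDensity fun x => ENNReal.ofReal (p x))
    (πe : (Fin I → ℝ) → Measure (EuclideanSpace ℝ (Fin N)))
    (hπe : ∀ η, πe η = (∫⁻ x, ENNReal.ofReal (pe η x))⁻¹ •
        volume.withDensity fun x => ENNReal.ofReal (pe η x)) :
    Tendsto (fun η : Fin I → ℝ =>
        ⨆ A : {A : Set (EuclideanSpace ℝ (Fin N)) // MeasurableSet A},
          |(π A.1).toReal - (πe η A.1).toReal|)
      (nhdsWithin 0 {η : Fin I → ℝ | ∀ i, 0 < η i}) (nhds 0) :=
  stmt19_general N I Mi D h f ef hef hint hpos g hg hgb p hp pe hpe π hπ πe hπe
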